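/- Finite linear combinations of half-space indicator functions are uniformly dense in the continuous functions on the unit cube: for every n ≥ 1, every continuous function f : [0,1]^n → ℝ, and every ε > 0, there exist a natural number N, real coefficients p_1, …, p_N, vectors w_1, …, w_N ∈ ℝ^n, and reals b_1, …, b_N such that |f(x) − Σ_{j=1}^N p_j · 1(⟨w_j, x⟩ − b_j > 0)| < ε for all x ∈ [0,1]^n. -/

import Mathlib

/-!
The uniform closure on the cube of the span of half-space indicators is a linear space. It
contains every ridge function `x ↦ g ⟨w, x⟩` with `g` continuous, because on the compact interval
swept out by `⟨w, x⟩` the function `g` is uniformly approximated by a staircase, i.e. by a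
combination of steps `t ↦ 1(t > c)`. The exponential ridges `x ↦ exp ⟨w, x⟩` are closed under
products and separate points, so by Stone–Weierstrass their span is already dense in `C(I_n)`.
-/

open Set Submodule

section UniformClosure

variable {α β : Type*}

def uniformClosureOn (V : Submodule ℝ (α → ℝ)) (s : Set α) : Submodule ℝ (α → ℝ) where
  carrier := {f | ∀ ε > 0, ∃ g ∈ V, ∀ x ∈ s, |f x - g x| < ε}
  zero_mem' ε hε := ⟨0, V.zero_mem, fun _ _ => by simpa using hε⟩
  add_mem' {f₁ f₂} h₁ h₂ ε hε := by
    obtain ⟨g₁, hg₁V, hg₁⟩ := h₁ (ε / 2) (half_pos hε)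
    obtain ⟨g₂, hg₂V, hg₂⟩ := h₂ (ε / 2) (half_pos hε)
    refine ⟨g₁ + g₂, V.add_mem hg₁V hg₂V, fun x hx => ?_⟩
    calc |(f₁ + f₂) x - (g₁ + g₂) x| = |(f₁ x - g₁ x) + (f₂ x - g₂ x)| := by
          simp only [Pi.add_apply]; ring_nf
      _ ≤ |f₁ x - g₁ x| + |f₂ x - g₂ x| := abs_add_le _ _
      _ < ε / 2 + ε / 2 := add_lt_add (hg₁ x hx) (hg₂ x hx)
      _ = ε := add_halves ε
  smul_mem' c f hf ε hε := by
    obtain ⟨g, hgV, hg⟩ := hf (ε / (|c| + 1)) (by positivity)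
    refine ⟨c • g, V.smul_mem c hgV, fun x hx => ?_⟩
    calc |(c • f) x - (c • g) x| = |c| * |f x - g x| := by
          simp only [Pi.smul_apply, smul_eq_mul, ← mul_sub, abs_mul]
      _ ≤ (|c| + 1) * |f x - g x| := by gcongr; linarith
      _ < (|c| + 1) * (ε / (|c| + 1)) := by gcongr; exact hg x hx
      _ = ε := mul_div_cancel₀ ε (by positivity)

theorem uniformClosureOn_mono {V W : Submodule ℝ (α → ℝ)} (h : V ≤ W) (s : Set α) :
    uniformClosureOn V s ≤ uniformClosureOn W s := fun _ hf ε hε =>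
  let ⟨g, hgV, hg⟩ := hf ε hε
  ⟨g, h hgV, hg⟩

theorem uniformClosureOn_le_of_le {V W : Submodule ℝ (α → ℝ)} {s : Set α}
    (h : V ≤ uniformClosureOn W s) : uniformClosureOn V s ≤ uniformClosureOn W s := by
  intro f hf ε hε
  obtain ⟨g, hgV, hfg⟩ := hf (ε / 2) (half_pos hε)
  obtain ⟨k, hkW, hgk⟩ := h hgV (ε / 2) (half_pos hε)
  refine ⟨k, hkW, fun x hx => ?_⟩
  calc |f x - k x| ≤ |f x - g x| + |g x - k x| := abs_sub_le _ _ _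
    _ < ε / 2 + ε / 2 := add_lt_add (hfg x hx) (hgk x hx)
    _ = ε := add_halves ε

theorem comp_mem_uniformClosureOn {V : Submodule ℝ (α → ℝ)} {s : Set α} {f : α → ℝ}
    (hf : f ∈ uniformClosureOn V s) {φ : β → α} {t : Set β} (hφ : MapsTo φ t s) :
    f ∘ φ ∈ uniformClosureOn (V.map (LinearMap.funLeft ℝ ℝ φ)) t := by
  intro ε hε
  obtain ⟨g, hgV, hg⟩ := hf ε hε
  exact ⟨g ∘ φ, mem_map_of_mem hgV, fun x hx => hg (φ x) (hφ hx)⟩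

end UniformClosure

noncomputable def step (c : ℝ) : ℝ → ℝ := fun t => if t - c > 0 then 1 else 0

noncomputable def stepSpan : Submodule ℝ (ℝ → ℝ) := span ℝ (range step)

theorem sum_step_eq_of_mem_Icc {a h : ℝ} (hh : 0 < h) {m : ℕ} (v : ℕ → ℝ) {t : ℝ}
    (ht : t ∈ Icc a (a + m * h)) :
    v 0 * step (a - 1) t + ∑ j ∈ Finset.range m, (v (j + 1) - v j) * step (a + j * h) t
      = v ⌈(t - a) / h⌉₊ := by
  set K := ⌈(t - a) / h⌉₊
  have hstep : ∀ j : ℕ, step (a + j * h) t = if j < K then 1 else 0 := fun j => by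
    have : t - (a + j * h) > 0 ↔ j < K := by
      rw [Nat.lt_ceil, lt_div_iff₀ hh]; constructor <;> intro <;> linarith
    simp only [step, this]
  have hK : K ≤ m := Nat.ceil_le.2 <| by
    rw [div_le_iff₀ hh]; linarith [ht.2]
  have hfilter : (Finset.range m).filter (· < K) = Finset.range K := by
    ext j; simp only [Finset.mem_filter, Finset.mem_range]; omega
  simp only [hstep, mul_ite, mul_one, mul_zero, ← Finset.sum_filter, hfilter,
    Finset.sum_range_sub (fun j => v j)]
  simp [step, show t - (a - 1) > 0 by linarith [ht.1]]

theorem mem_uniformClosureOn_stepSpan {g : ℝ → ℝ} {a b : ℝ} (hg : ContinuousOn g (Icc a b)) :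
    g ∈ uniformClosureOn stepSpan (Icc a b) := by
  intro ε hε
  rcases le_or_gt b a with hba | hab
  · refine ⟨g a • step (a - 1), smul_mem _ _ (subset_span (mem_range_self _)), fun t ht => ?_⟩
    obtain rfl : t = a := le_antisymm (ht.2.trans hba) ht.1
    simpa [step] using hε
  obtain ⟨δ, hδ, hgδ⟩ := Metric.uniformContinuousOn_iff.1
    (isCompact_Icc.uniformContinuousOn_of_continuous hg) ε hε
  obtain ⟨m, hm⟩ := exists_nat_gt ((b - a) / δ)
  have hm0 : (0 : ℝ) < m := lt_of_le_of_lt (by positivity) hm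
  set h := (b - a) / m
  have hh : 0 < h := div_pos (by linarith) hm0
  have hhδ : h < δ := by rwa [div_lt_iff₀ hm0, mul_comm, ← div_lt_iff₀ hδ]
  have hb : a + m * h = b := by simp only [h]; field_simp; ring
  set v : ℕ → ℝ := fun j => g (a + j * h)
  refine ⟨v 0 • step (a - 1) + ∑ j ∈ Finset.range m, (v (j + 1) - v j) • step (a + j * h),
    add_mem (smul_mem _ _ (subset_span (mem_range_self _)))
      (sum_mem fun j _ => smul_mem _ _ (subset_span (mem_range_self _))), fun t ht => ?_⟩
  have htm : t ∈ Icc a (a + m * h) := hb ▸ ht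
  simp only [Pi.add_apply, Finset.sum_apply, Pi.smul_apply, smul_eq_mul]
  rw [sum_step_eq_of_mem_Icc hh v htm]
  set K := ⌈(t - a) / h⌉₊
  have hq : 0 ≤ (t - a) / h := div_nonneg (by linarith [ht.1]) hh.le
  have hKlo : t ≤ a + K * h := by
    have := Nat.le_ceil ((t - a) / h); rw [div_le_iff₀ hh] at this; linarith
  have hKhi : a + K * h < t + h := by
    have := Nat.ceil_lt_add_one hq; rw [← sub_lt_iff_lt_add, lt_div_iff₀ hh] at this
    linarith
  have hKb : a + K * h ≤ b := by
    rw [← hb]; gcongr; exact_mod_cast Nat.ceil_le.2 (by rw [div_le_iff₀ hh]; linarith [ht.2])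
  have := hgδ t ht (a + K * h) ⟨by linarith [ht.1], hKb⟩
    (by rw [Real.dist_eq, abs_lt]; constructor <;> linarith)
  rwa [Real.dist_eq] at this

section Halfspace

variable {ι : Type*} [Fintype ι]

noncomputable def halfspaceIndicator (w : ι → ℝ) (b : ℝ) : (ι → ℝ) → ℝ :=
  fun x => if (∑ i, w i * x i) - b > 0 then 1 else 0

variable (ι) in
def halfspaceSpan : Submodule ℝ ((ι → ℝ) → ℝ) :=
  span ℝ (range fun wb : (ι → ℝ) × ℝ => halfspaceIndicator wb.1 wb.2)

theorem exists_eq_sum_of_mem_halfspaceSpan {g : (ι → ℝ) → ℝ} (hg : g ∈ halfspaceSpan ι) :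
    ∃ (N : ℕ) (p : Fin N → ℝ) (w : Fin N → ι → ℝ) (b : Fin N → ℝ),
      g = fun x => ∑ j, p j * (if (∑ i, w j i * x i) - b j > 0 then (1 : ℝ) else 0) := by
  obtain ⟨N, p, h, rfl⟩ := mem_span_set'.1 hg
  choose wb hwb using fun j => (h j).2
  refine ⟨N, p, fun j => (wb j).1, fun j => (wb j).2, ?_⟩
  ext x
  simp only [Finset.sum_apply, Pi.smul_apply, smul_eq_mul, ← hwb]
  rfl

theorem comp_mem_uniformClosureOn_halfspaceSpan {K : Set (ι → ℝ)} (hK : IsCompact K)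
    {g : ℝ → ℝ} (hg : Continuous g) (w : ι → ℝ) :
    (fun x => g (∑ i, w i * x i)) ∈ uniformClosureOn (halfspaceSpan ι) K := by
  set φ : (ι → ℝ) → ℝ := fun x => ∑ i, w i * x i
  have hφK : IsCompact (φ '' K) := hK.image (by fun_prop)
  obtain ⟨a, ha⟩ := hφK.bddBelow
  obtain ⟨b, hb⟩ := hφK.bddAbove
  have hmaps : MapsTo φ K (Icc a b) := fun x hx =>
    ⟨ha (mem_image_of_mem φ hx), hb (mem_image_of_mem φ hx)⟩
  have hmap : stepSpan.map (LinearMap.funLeft ℝ ℝ φ) ≤ halfspaceSpan ι := by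
    rw [stepSpan, map_span]
    refine span_mono ?_
    rintro _ ⟨_, ⟨c, rfl⟩, rfl⟩
    exact ⟨(w, c), rfl⟩
  exact uniformClosureOn_mono hmap K
    (comp_mem_uniformClosureOn (mem_uniformClosureOn_stepSpan hg.continuousOn) hmaps)

end Halfspace

theorem Subalgebra.SeparatesPoints.mem_uniformClosureOn {X : Type*} [TopologicalSpace X]
    [NormalSpace X] [T2Space X] {A : Subalgebra ℝ C(X, ℝ)} (hA : A.SeparatesPoints)
    {K : Set X} (hK : IsCompact K) {f : X → ℝ} (hf : ContinuousOn f K) :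
    f ∈ uniformClosureOn (A.toSubmodule.map (ContinuousMap.coeFnLinearMap ℝ)) K := by
  intro ε hε
  obtain ⟨F, hFf⟩ := ContinuousMap.exists_restrict_eq hK.isClosed ⟨K.domRestrict f, hf.domRestrict⟩
  obtain ⟨g, hgA, hFg⟩ :=
    ContinuousMap.exists_mem_subalgebra_near_continuous_of_isCompact_of_separatesPoints hA F hK hε
  refine ⟨g, mem_map_of_mem hgA, fun x hx => ?_⟩
  have hFx : F x = f x := congr($hFf ⟨x, hx⟩)
  rw [abs_sub_comm, ← hFx, ← Real.norm_eq_abs]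
  exact hFg x hx

section ExpRidge

variable {ι : Type*} [Fintype ι]

/-- Indexed by `Multiplicative` so that the exponential ridges form a submonoid, whose linear
span is then the algebra they generate. -/
noncomputable def expRidge : Multiplicative (ι → ℝ) →* C(ι → ℝ, ℝ) where
  toFun w := ⟨fun x => Real.exp (∑ i, w.toAdd i * x i), by fun_prop⟩
  map_one' := by ext; simp
  map_mul' v w := by ext; simp [Real.exp_add, add_mul, Finset.sum_add_distrib]

variable (ι) in
noncomputable def expRidgeAlgebra : Subalgebra ℝ C(ι → ℝ, ℝ) :=
  Algebra.adjoin ℝ (MonoidHom.mrange (expRidge (ι := ι)) : Set C(ι → ℝ, ℝ))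

theorem expRidgeAlgebra_separatesPoints : (expRidgeAlgebra ι).SeparatesPoints := by
  classical
  intro x y hxy
  obtain ⟨i, hi⟩ : ∃ i, x i ≠ y i := Function.ne_iff.1 hxy
  refine ⟨_, ⟨expRidge (.ofAdd (Pi.single i 1)), Algebra.subset_adjoin ⟨_, rfl⟩, rfl⟩, ?_⟩
  simpa [expRidge, Pi.single_apply] using hi

theorem map_expRidgeAlgebra_le_uniformClosureOn_halfspaceSpan {K : Set (ι → ℝ)}
    (hK : IsCompact K) :
    (expRidgeAlgebra ι).toSubmodule.map (ContinuousMap.coeFnLinearMap ℝ) ≤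
      uniformClosureOn (halfspaceSpan ι) K := by
  rw [expRidgeAlgebra, Algebra.adjoin_eq_span, Submonoid.closure_eq, map_span, span_le]
  rintro _ ⟨_, ⟨w, rfl⟩, rfl⟩
  exact comp_mem_uniformClosureOn_halfspaceSpan hK Real.continuous_exp w.toAdd

end ExpRidge

theorem halfspace_indicator_combinations_dense_general (n : ℕ)
    (f : (Fin n → ℝ) → ℝ)
    (hf : ContinuousOn f {x : Fin n → ℝ | ∀ i, x i ∈ Set.Icc (0 : ℝ) 1})
    (ε : ℝ) (hε : 0 < ε) :
    ∃ (N : ℕ) (p : Fin N → ℝ) (w : Fin N → Fin n → ℝ) (b : Fin N → ℝ),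
      ∀ x : Fin n → ℝ, (∀ i, x i ∈ Set.Icc (0 : ℝ) 1) →
        |f x - ∑ j, p j * (if (∑ i, w j i * x i) - b j > 0 then (1 : ℝ) else 0)| < ε := by
  have hK : IsCompact {x : Fin n → ℝ | ∀ i, x i ∈ Set.Icc (0 : ℝ) 1} := by
    simpa [Set.pi] using isCompact_univ_pi fun _ : Fin n => isCompact_Icc (a := (0 : ℝ)) (b := 1)
  obtain ⟨g, hg, hfg⟩ := uniformClosureOn_le_of_le
    (map_expRidgeAlgebra_le_uniformClosureOn_halfspaceSpan hK)
    (expRidgeAlgebra_separatesPoints.mem_uniformClosureOn hK hf) ε hε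
  obtain ⟨N, p, w, b, rfl⟩ := exists_eq_sum_of_mem_halfspaceSpan hg
  exact ⟨N, p, w, b, hfg⟩

/-- Finite linear combinations of half-space indicator functions are uniformly dense in
the continuous functions on the unit cube `[0,1]^n` (universal function approximation
for ICCTs, Cybenko-style). -/
theorem halfspace_indicator_combinations_dense (n : ℕ) (hn : 1 ≤ n)
    (f : (Fin n → ℝ) → ℝ)
    (hf : ContinuousOn f {x : Fin n → ℝ | ∀ i, x i ∈ Set.Icc (0 : ℝ) 1})
    (ε : ℝ) (hε : 0 < ε) :
    ∃ (N : ℕ) (p : Fin N → ℝ) (w : Fin N → Fin n → ℝ) (b : Fin N → ℝ),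
      ∀ x : Fin n → ℝ, (∀ i, x i ∈ Set.Icc (0 : ℝ) 1) →
        |f x - ∑ j, p j * (if (∑ i, w j i * x i) - b j > 0 then (1 : ℝ) else 0)| < ε :=
  halfspace_indicator_combinations_dense_general n f hf ε hε
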